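/- There exist constants C > 0 and δ > 0 such that for all α > 0 and Δ > 0 with αΔ < δ, the SPDE approximation to the ν = 3/2, d = 1 spectral density at frequency 1/(2Δ) satisfies | M̃_Δ(1/(2Δ); 3/2, 1)/(4/α) − α⁴Δ⁴/16 + α⁶Δ⁶/32 | ≤ C α⁸Δ⁸, while M̃_Δ(0; 3/2, 1)/(4/α) = 1 exactly. -/

import Mathlib

/-!
Write `x = αΔ`. At the highest frequency the normalised density is `x⁴ / (x² + 4)²`, and its
remainder after the two Taylor terms is exactly `x⁸ (x² + 6) / (32 (x² + 4)²)`, which is at most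
`3 x⁸ / 256` for every real `x` (so any `δ` works). At frequency `0` the two exponential terms
cancel `1/x`, leaving the denominator `x / 2`.
-/

open Real

lemma pow_four_div_sq_add_four_sub_taylor (x : ℝ) :
    x ^ 4 / (x ^ 2 + 4) ^ 2 - x ^ 4 / 16 + x ^ 6 / 32
      = x ^ 8 * (x ^ 2 + 6) / (32 * (x ^ 2 + 4) ^ 2) := by
  field_simp
  ring

lemma abs_pow_four_div_sq_add_four_sub_taylor_le (x : ℝ) :
    |x ^ 4 / (x ^ 2 + 4) ^ 2 - x ^ 4 / 16 + x ^ 6 / 32| ≤ 3 / 256 * x ^ 8 := by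
  rw [pow_four_div_sq_add_four_sub_taylor, abs_of_nonneg (by positivity),
    div_le_iff₀ (by positivity)]
  have hx2 : 0 ≤ x ^ 2 := sq_nonneg x
  have hx8 : 0 ≤ x ^ 8 := by positivity
  nlinarith [mul_nonneg hx8 (mul_nonneg hx2 hx2), mul_nonneg hx8 hx2]

lemma spde_highFreq_div_eq (α Δ : ℝ) (hα : α ≠ 0) (hΔ : Δ ≠ 0) :
    α * Δ ^ 2 / (α * Δ / 2 + 2 / (α * Δ)) ^ 2 / (4 / α)
      = (α * Δ) ^ 4 / ((α * Δ) ^ 2 + 4) ^ 2 := by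
  field_simp
  ring

lemma half_add_inv_sub_half_inv_sub_half_inv (x : ℝ) :
    x / 2 + 1 / x - 1 / (2 * x) - 1 / (2 * x) = x / 2 := by
  ring

lemma spde_zeroFreq_div_eq_one (α Δ : ℝ) (hα : α ≠ 0) (hΔ : Δ ≠ 0) :
    α * Δ ^ 2 / (α * Δ / 2 + 1 / (α * Δ) - 1 / (2 * α * Δ) - 1 / (2 * α * Δ)) ^ 2 / (4 / α)
      = 1 := by
  rw [mul_assoc 2 α Δ, half_add_inv_sub_half_inv_sub_half_inv]
  field_simp
  ring

/-- Expansion of the SPDE approximation to the Matérn (ν = 3/2, d = 1) spectral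
density at the highest frequency `1/(2Δ)`, where
`M̃_Δ(1/(2Δ); 3/2, 1) = αΔ²/(αΔ/2 + 2/(αΔ))²`:
`M̃_Δ(1/(2Δ); 3/2, 1)/(4/α) = α⁴Δ⁴/16 - α⁶Δ⁶/32 + O(α⁸Δ⁸)`,
while at frequency 0, `M̃_Δ(0; 3/2, 1)/(4/α) = 1` exactly, where
`M̃_Δ(0; 3/2, 1) = αΔ²/(αΔ/2 + 1/(αΔ) - 1/(2αΔ) - 1/(2αΔ))²`. -/
theorem spde_threehalves_d1_expansion :
    ∃ C > (0 : ℝ), ∃ δ > (0 : ℝ), ∀ α Δ : ℝ, 0 < α → 0 < Δ → α * Δ < δ →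
      |(α * Δ ^ 2 / (α * Δ / 2 + 2 / (α * Δ)) ^ 2) / (4 / α)
          - α ^ 4 * Δ ^ 4 / 16 + α ^ 6 * Δ ^ 6 / 32| ≤ C * α ^ 8 * Δ ^ 8
      ∧ (α * Δ ^ 2 / (α * Δ / 2 + 1 / (α * Δ) - 1 / (2 * α * Δ) - 1 / (2 * α * Δ)) ^ 2)
          / (4 / α) = 1 := by
  refine ⟨3 / 256, by norm_num, 1, one_pos, fun α Δ hα hΔ _ => ⟨?_, ?_⟩⟩
  · have hbound := abs_pow_four_div_sq_add_four_sub_taylor_le (α * Δ)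
    rw [spde_highFreq_div_eq α Δ hα.ne' hΔ.ne', mul_assoc]
    simpa only [mul_pow] using hbound
  · exact spde_zeroFreq_div_eq_one α Δ hα.ne' hΔ.ne'
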